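/- arXiv:1906.10436 — 4 statements merged into one kernel-verified Lean document; each statement's English description precedes it below -/
import Mathlib

section
/- For positive definite matrices X_1,...,X_K, the map Λ ↦ Σ_i X_i Λ X_i on symmetric n×n matrices is a linear bijection; in particular, for any symmetric matrix S there exists a unique symmetric Λ with Σ_i X_i Λ X_i = S. -/
open Matrix

/-!
Writing `X i = (Y i)ᴴ * Y i` with `Y i` invertible, the map `T Λ = ∑ i, X i * Λ * X i` satisfies
`tr (Λᴴ * T Λ) = ∑ i, ‖Y i * Λ * (Y i)ᴴ‖²` (Frobenius norm), which is positive for `Λ ≠ 0`.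
So `T` is injective, hence bijective on the finite-dimensional space of matrices, and since `T`
commutes with `ᴴ`, the preimage of a Hermitian matrix is Hermitian.
-/

namespace Matrix

variable {m ι 𝕜 : Type*} [Fintype m] [DecidableEq m] [Fintype ι] [RCLike 𝕜]

open scoped ComplexOrder MatrixOrder

theorem PosDef.trace_conjTranspose_mul_mul_mul_pos {X : Matrix m m 𝕜} (hX : X.PosDef)
    {Λ : Matrix m m 𝕜} (hΛ : Λ ≠ 0) : 0 < (Λᴴ * X * Λ * X).trace := by
  obtain ⟨Y, hY, rfl⟩ :=
    CStarAlgebra.isStrictlyPositive_iff_eq_star_mul_self.mp hX.isStrictlyPositive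
  rw [star_eq_conjTranspose]
  have hYΛY : Y * Λ * Yᴴ ≠ 0 := by
    have hY' : IsUnit Yᴴ := hY.star
    rwa [Ne, hY'.mul_left_eq_zero, hY.mul_right_eq_zero]
  have h : (Λᴴ * (Yᴴ * Y) * Λ * (Yᴴ * Y)).trace = ((Y * Λ * Yᴴ)ᴴ * (Y * Λ * Yᴴ)).trace := by
    rw [show Λᴴ * (Yᴴ * Y) * Λ * (Yᴴ * Y) = (Λᴴ * Yᴴ * Y * Λ * Yᴴ) * Y by simp only [mul_assoc],
      trace_mul_comm]
    simp only [conjTranspose_mul, conjTranspose_conjTranspose, mul_assoc]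
  rw [h]
  exact (posSemidef_conjTranspose_mul_self _).trace_nonneg.lt_of_ne'
    (trace_conjTranspose_mul_self_eq_zero_iff.not.mpr hYΛY)

def sandwichSum (X : ι → Matrix m m 𝕜) : Matrix m m 𝕜 →ₗ[𝕜] Matrix m m 𝕜 :=
  ∑ i, LinearMap.mulLeftRight 𝕜 (X i, X i)

theorem sandwichSum_apply (X : ι → Matrix m m 𝕜) (Λ : Matrix m m 𝕜) :
    sandwichSum X Λ = ∑ i, X i * Λ * X i := by
  simp only [sandwichSum, LinearMap.sum_apply, LinearMap.mulLeftRight_apply]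

theorem sandwichSum_conjTranspose {X : ι → Matrix m m 𝕜} (hX : ∀ i, (X i).IsHermitian)
    (Λ : Matrix m m 𝕜) : sandwichSum X Λᴴ = (sandwichSum X Λ)ᴴ := by
  simp only [sandwichSum_apply, conjTranspose_sum, conjTranspose_mul, (hX _).eq, mul_assoc]

theorem sandwichSum_injective [Nonempty ι] {X : ι → Matrix m m 𝕜} (hX : ∀ i, (X i).PosDef) :
    Function.Injective (sandwichSum X) := by
  rw [← LinearMap.ker_eq_bot, LinearMap.ker_eq_bot']
  intro Λ hΛ
  by_contra hne
  have hpos : 0 < (Λᴴ * sandwichSum X Λ).trace := by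
    rw [sandwichSum_apply, Finset.mul_sum, trace_sum]
    exact Finset.sum_pos (fun i _ => by simpa only [mul_assoc] using
      (hX i).trace_conjTranspose_mul_mul_mul_pos hne) Finset.univ_nonempty
  simp [hΛ] at hpos

theorem existsUnique_isHermitian_sandwichSum_eq [Nonempty ι] {X : ι → Matrix m m 𝕜}
    (hX : ∀ i, (X i).PosDef) {S : Matrix m m 𝕜} (hS : S.IsHermitian) :
    ∃! Λ : Matrix m m 𝕜, Λ.IsHermitian ∧ sandwichSum X Λ = S := by
  have hinj := sandwichSum_injective hX
  obtain ⟨Λ, hΛ⟩ := LinearMap.injective_iff_surjective.mp hinj S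
  have hΛH : Λ.IsHermitian :=
    hinj (by rw [sandwichSum_conjTranspose (fun i => (hX i).isHermitian), hΛ, hS.eq])
  exact ⟨Λ, ⟨hΛH, hΛ⟩, fun Λ' ⟨_, hΛ'⟩ => hinj (hΛ'.trans hΛ.symm)⟩

end Matrix

theorem simplex_linear_system_bijective_general {n K : ℕ} (hK : 1 ≤ K)
    (X : Fin K → Matrix (Fin n) (Fin n) ℝ) (hX : ∀ i, (X i).PosDef)
    (S : Matrix (Fin n) (Fin n) ℝ) (hS : S.IsSymm) :
    ∃! Λ : Matrix (Fin n) (Fin n) ℝ, Λ.IsSymm ∧ ∑ i, X i * Λ * X i = S := by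
  have : Nonempty (Fin K) := ⟨⟨0, hK⟩⟩
  simpa only [isHermitian_iff_isSymm, sandwichSum_apply] using
    existsUnique_isHermitian_sandwichSum_eq hX (isHermitian_iff_isSymm.mpr hS)

/-- For positive definite matrices `X 1, ..., X K`, the map `Λ ↦ ∑ i, X i * Λ * X i` is a
linear bijection on symmetric matrices: for any symmetric `S` there is a unique symmetric `Λ`
with `∑ i, X i * Λ * X i = S`. -/
theorem simplex_linear_system_bijective {n K : ℕ} (hn : 1 ≤ n) (hK : 1 ≤ K)
    (X : Fin K → Matrix (Fin n) (Fin n) ℝ) (hX : ∀ i, (X i).PosDef)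
    (S : Matrix (Fin n) (Fin n) ℝ) (hS : S.IsSymm) :
    ∃! Λ : Matrix (Fin n) (Fin n) ℝ, Λ.IsSymm ∧ ∑ i, X i * Λ * X i = S :=
  simplex_linear_system_bijective_general hK X hX S hS
end

section
/- With ξ = Π_x(z) defined by ξ_i = Z_i + X_i Λ X_i where Λ solves Σ_i X_i Λ X_i = −Σ_i Z_i, the residual z − ξ is orthogonal to every tangent vector η (i.e., symmetric matrices η_1,...,η_K with Σ_i η_i = 0) under the metric g(u,v) = Σ_i trace(X_i⁻¹ u_i X_i⁻¹ v_i). -/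
open Matrix

/-- The residual `z - Π_x(z)` is orthogonal, for the metric
`g(u,v) = ∑ i, trace ((X i)⁻¹ * u i * (X i)⁻¹ * v i)`, to every tangent vector `η`
(symmetric matrices summing to zero). -/
theorem residual_orthogonal_to_tangent {n K : ℕ}
    (X Z : Fin K → Matrix (Fin n) (Fin n) ℝ) (hX : ∀ i, (X i).PosDef)
    (hZ : ∀ i, (Z i).IsSymm)
    (Λ : Matrix (Fin n) (Fin n) ℝ) (hΛsymm : Λ.IsSymm)
    (hΛ : ∑ i, X i * Λ * X i = -∑ i, Z i)
    (ξ : Fin K → Matrix (Fin n) (Fin n) ℝ)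
    (hξ : ∀ i, ξ i = Z i + X i * Λ * X i) :
    ∀ η : Fin K → Matrix (Fin n) (Fin n) ℝ, (∀ i, (η i).IsSymm) → ∑ i, η i = 0 →
      ∑ i, ((X i)⁻¹ * (Z i - ξ i) * (X i)⁻¹ * η i).trace = 0 := by
  intro η hηsymm hηsum
  have key : ∀ i, (X i)⁻¹ * (Z i - ξ i) * (X i)⁻¹ * η i = -(Λ * η i) := by
    intro i
    have hinv : IsUnit (X i).det := (hX i).det_pos.ne'.isUnit
    have h1 : Z i - ξ i = -(X i * Λ * X i) := by rw [hξ i]; abel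
    rw [h1]
    rw [show (X i)⁻¹ * -(X i * Λ * X i) * (X i)⁻¹ = -((X i)⁻¹ * X i * Λ * (X i * (X i)⁻¹)) by
      noncomm_ring]
    rw [nonsing_inv_mul _ hinv, mul_nonsing_inv _ hinv]
    simp
  calc ∑ i, ((X i)⁻¹ * (Z i - ξ i) * (X i)⁻¹ * η i).trace
      = ∑ i, -(Λ * η i).trace := by
        refine Finset.sum_congr rfl fun i _ => ?_
        rw [key i, trace_neg]
    _ = -(Λ * ∑ i, η i).trace := by
        simp [Finset.mul_sum, trace_sum, Finset.sum_neg_distrib]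
    _ = 0 := by rw [hηsum, mul_zero, trace_zero, neg_zero]
end

section
/- For a symmetric positive definite matrix X and symmetric matrix ξ, one has X · expm(X⁻¹ ξ) = X^{1/2} · expm(X^{−1/2} ξ X^{−1/2}) · X^{1/2}; in particular X · expm(X⁻¹ ξ) is symmetric positive definite. -/
open Matrix NormedSpace

section

open scoped ComplexOrder

/-- The positive semidefinite square root of a positive semidefinite matrix
(the definition `Matrix.PosSemidef.sqrt` of the older Mathlib, since removed). -/
noncomputable def Matrix.PosSemidef.sqrt {n 𝕜 : Type*} [Fintype n] [DecidableEq n] [RCLike 𝕜]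
    {A : Matrix n n 𝕜} (hA : A.PosSemidef) : Matrix n n 𝕜 :=
  hA.1.eigenvectorUnitary.1 * diagonal ((↑) ∘ (√·) ∘ hA.1.eigenvalues) *
  (star hA.1.eigenvectorUnitary : Matrix n n 𝕜)

end

/-! Write `S = X^{1/2}`. Since `X⁻¹ = S⁻¹ S⁻¹`, the matrix `X⁻¹ ξ` is conjugate by `S` to the
symmetric matrix `S⁻¹ ξ S⁻¹`, and the exponential commutes with conjugation. The exponential of a
symmetric matrix is the square of a symmetric invertible matrix, hence positive definite, and
congruence `M ↦ S M S` by the invertible symmetric `S` preserves positive definiteness. -/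

namespace Matrix

open scoped ComplexOrder

variable {n 𝕜 : Type*} [Fintype n] [DecidableEq n] [RCLike 𝕜]

namespace PosSemidef

variable {A : Matrix n n 𝕜} (hA : A.PosSemidef)
include hA

lemma isHermitian_sqrt : hA.sqrt.IsHermitian :=
  isHermitian_mul_mul_conjTranspose _ <|
    isHermitian_diagonal_of_self_adjoint _ (by ext i; simp)

lemma sqrt_mul_sqrt : hA.sqrt * hA.sqrt = A := by
  set U : Matrix n n 𝕜 := hA.1.eigenvectorUnitary.1
  set D : Matrix n n 𝕜 := diagonal ((↑) ∘ (√·) ∘ hA.1.eigenvalues)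
  have hDD : D * D = diagonal ((↑) ∘ hA.1.eigenvalues) := by
    rw [diagonal_mul_diagonal]
    congr 1
    ext i
    simp [← RCLike.ofReal_mul, Real.mul_self_sqrt (hA.eigenvalues_nonneg i)]
  calc hA.sqrt * hA.sqrt = U * (D * (star U * U) * D) * star U := by
        simp only [sqrt, U, D, Matrix.mul_assoc]
    _ = A := by
      rw [Unitary.coe_star_mul_self, Matrix.mul_one, hDD]
      conv_rhs => rw [hA.1.spectral_theorem, Unitary.conjStarAlgAut_apply]

end PosSemidef

lemma PosDef.isUnit_sqrt {A : Matrix n n 𝕜} (hA : A.PosDef) : IsUnit hA.posSemidef.sqrt :=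
  isUnit_of_mul_isUnit_left (hA.posSemidef.sqrt_mul_sqrt ▸ hA.isUnit)

lemma IsHermitian.posDef_exp {A : Matrix n n 𝕜} (hA : A.IsHermitian) :
    (NormedSpace.exp A).PosDef := by
  set B := NormedSpace.exp ((1 / 2 : ℝ) • A)
  have hB : star B = B := (hA.smul (IsSelfAdjoint.all _)).exp
  have hBB : B * B = NormedSpace.exp A := by
    rw [← exp_add_of_commute _ _ (Commute.refl _), ← add_smul]; norm_num
  have := (IsUnit.posDef_star_left_conjugate_iff (x := 1) (isUnit_exp ((1 / 2 : ℝ) • A))).2 .one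
  rwa [Matrix.mul_one, hB, hBB] at this

lemma mul_self_mul_exp_inv_mul {S : Matrix n n 𝕜} (hS : IsUnit S) (ξ : Matrix n n 𝕜) :
    S * S * exp ((S * S)⁻¹ * ξ) = S * exp (S⁻¹ * ξ * S⁻¹) * S := by
  have hdet := (isUnit_iff_isUnit_det S).1 hS
  have hconj : (S * S)⁻¹ * ξ = S⁻¹ * (S⁻¹ * ξ * S⁻¹) * S := by
    simp [mul_inv_rev, Matrix.mul_assoc, nonsing_inv_mul _ hdet]
  rw [hconj, exp_conj' _ _ hS]
  simp only [Matrix.mul_assoc, mul_nonsing_inv_cancel_left _ _ hdet]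

end Matrix

/-- For `X` symmetric positive definite and `ξ` symmetric,
`X * exp(X⁻¹ * ξ) = X^{1/2} * exp(X^{-1/2} * ξ * X^{-1/2}) * X^{1/2}`; in particular
`X * exp(X⁻¹ * ξ)` is symmetric positive definite. -/
theorem exp_sandwich_posDef {n : ℕ} (X ξ : Matrix (Fin n) (Fin n) ℝ)
    (hX : X.PosDef) (hξ : ξ.IsSymm) :
    X * exp (X⁻¹ * ξ)
      = hX.posSemidef.sqrt * exp ((hX.posSemidef.sqrt)⁻¹ * ξ * (hX.posSemidef.sqrt)⁻¹) *
          hX.posSemidef.sqrt ∧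
    (X * exp (X⁻¹ * ξ)).PosDef := by
  set S := hX.posSemidef.sqrt
  have hS : S.IsHermitian := hX.posSemidef.isHermitian_sqrt
  have hSu : IsUnit S := hX.isUnit_sqrt
  have hSS : S * S = X := hX.posSemidef.sqrt_mul_sqrt
  have hsandwich : X * exp (X⁻¹ * ξ) = S * exp (S⁻¹ * ξ * S⁻¹) * S :=
    hSS ▸ mul_self_mul_exp_inv_mul hSu ξ
  have hA : (S⁻¹ * ξ * S⁻¹).IsHermitian := by
    simpa only [hS.inv.eq] using
      isHermitian_mul_mul_conjTranspose S⁻¹ (isHermitian_iff_isSymm.2 hξ)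
  refine ⟨hsandwich, hsandwich ▸ ?_⟩
  simpa only [star_eq_conjTranspose, hS.eq] using
    (IsUnit.posDef_star_left_conjugate_iff hSu).2 hA.posDef_exp
end

section
/- The Riemannian gradient grad f = Π_x(X_1 symm(∇_1 f) X_1, ..., X_K symm(∇_K f) X_K) satisfies g(grad f, ξ) = Σ_i trace(symm(∇_i f) ξ_i) for every tangent vector ξ (symmetric ξ_i with Σ ξ_i = 0). -/
open Matrix

/-- The Riemannian gradient `grad f = Π_x(X i * symm(∇ i f) * X i)` satisfies
`g(grad f, ξ) = ∑ i, trace (symm(∇ i f) * ξ i)` for every tangent vector `ξ`. -/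
theorem riemannian_gradient_property {n K : ℕ}
    (X G : Fin K → Matrix (Fin n) (Fin n) ℝ) (hX : ∀ i, (X i).PosDef)
    (Λ : Matrix (Fin n) (Fin n) ℝ) (hΛsymm : Λ.IsSymm)
    (hΛ : ∑ i, X i * Λ * X i
        = -∑ i, X i * ((1 / 2 : ℝ) • (G i + (G i)ᵀ)) * X i)
    (grad : Fin K → Matrix (Fin n) (Fin n) ℝ)
    (hgrad : ∀ i, grad i
        = X i * ((1 / 2 : ℝ) • (G i + (G i)ᵀ)) * X i + X i * Λ * X i) :
    ∀ ξ : Fin K → Matrix (Fin n) (Fin n) ℝ,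
      (∀ i, (ξ i).IsSymm) → ∑ i, ξ i = 0 →
      ∑ i, ((X i)⁻¹ * grad i * (X i)⁻¹ * ξ i).trace
        = ∑ i, (((1 / 2 : ℝ) • (G i + (G i)ᵀ)) * ξ i).trace := by
  intro ξ hsymm hsum
  have key : ∀ i, (X i)⁻¹ * grad i * (X i)⁻¹
      = ((1 / 2 : ℝ) • (G i + (G i)ᵀ)) + Λ := by
    intro i
    have hu : IsUnit (X i).det := isUnit_iff_ne_zero.mpr (hX i).det_pos.ne'
    rw [hgrad i]
    set S := (1 / 2 : ℝ) • (G i + (G i)ᵀ)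
    have h1 : (X i)⁻¹ * (X i * S * X i) * (X i)⁻¹ = S := by
      rw [show X i * S * X i = X i * (S * X i) by rw [mul_assoc],
        ← mul_assoc, nonsing_inv_mul _ hu, one_mul, mul_assoc,
        mul_nonsing_inv _ hu, mul_one]
    have h2 : (X i)⁻¹ * (X i * Λ * X i) * (X i)⁻¹ = Λ := by
      rw [show X i * Λ * X i = X i * (Λ * X i) by rw [mul_assoc],
        ← mul_assoc, nonsing_inv_mul _ hu, one_mul, mul_assoc,
        mul_nonsing_inv _ hu, mul_one]
    rw [mul_add, add_mul, h1, h2]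
  simp only [key, add_mul, trace_add]
  rw [Finset.sum_add_distrib]
  have : ∑ i, (Λ * ξ i).trace = 0 := by
    rw [← trace_sum]
    rw [← Finset.mul_sum, hsum, mul_zero, trace_zero]
  rw [this, add_zero]
end
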